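/- arXiv:0907.3990 — 2 statements merged into one kernel-verified Lean document; each statement's English description precedes it below -/
import Mathlib

section
/- For any t ∈ ℂ, λ₁(ξ), λ₂(ξ) ∈ ℂ[ξ] and p₁(z), p₂(z) ∈ ℂ[z], we have (λ₁(ξ)p₁(z)) ∗_t (λ₂(ξ)p₂(z)) = (λ₁(ξ) ∗_t p₂(z))·(λ₂(ξ) ∗_t p₁(z)), where the product on the right-hand side is the usual polynomial product. -/
open MvPolynomial

noncomputable section

/-- ℂ[ξ,z] in 2n variables: `Sum.inl i` is ξᵢ, `Sum.inr i` is zᵢ. -/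
abbrev P (n : ℕ) := MvPolynomial (Fin n ⊕ Fin n) ℂ

variable {n : ℕ}

/-- ∂ᵢ = ∂/∂zᵢ -/
def dz (i : Fin n) : Module.End ℂ (P n) := (pderiv (Sum.inr i)).toLinearMap
/-- δᵢ = ∂/∂ξᵢ -/
def dxi (i : Fin n) : Module.End ℂ (P n) := (pderiv (Sum.inl i)).toLinearMap
/-- ∂^α (the factors pairwise commute, so the ordered product is the mathematical one) -/
def Dz (α : Fin n → ℕ) : Module.End ℂ (P n) := (List.ofFn (fun i => dz i ^ α i)).prod
/-- δ^α -/
def Dxi (α : Fin n → ℕ) : Module.End ℂ (P n) := (List.ofFn (fun i => dxi i ^ α i)).prod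
/-- |α| -/
def mdeg (α : Fin n → ℕ) : ℕ := ∑ i, α i
/-- α! -/
def mfact (α : Fin n → ℕ) : ℕ := ∏ i, (α i).factorial

/-- The deformed product `f ∗_t g = Σ_{α,β} ((-t)^{|α|+|β|}/(α!β!)) (δ^β ∂^α f)(∂^β δ^α g)`. -/
def astar (t : ℂ) (f g : P n) : P n :=
  ∑ᶠ (α : Fin n → ℕ), ∑ᶠ (β : Fin n → ℕ),
    ((-t) ^ (mdeg α + mdeg β) / ((mfact α : ℂ) * (mfact β : ℂ))) •
      (Dxi β (Dz α f) * Dz β (Dxi α g))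

/-- Λ = Σᵢ δᵢ∂ᵢ -/
def Lam : Module.End ℂ (P n) := ∑ i, dxi i * dz i
/-- Φ_t = e^{tΛ} -/
def Phi (t : ℂ) (f : P n) : P n := ∑ᶠ m : ℕ, (t ^ m / (m.factorial : ℂ)) • ((Lam ^ m) f)

def xiv (i : Fin n) : P n := X (Sum.inl i)
def zv (i : Fin n) : P n := X (Sum.inr i)
def XiPow (α : Fin n → ℕ) : P n := ∏ i, xiv i ^ α i
def ZPow' (α : Fin n → ℕ) : P n := ∏ i, zv i ^ α i
def mulXi (i : Fin n) : Module.End ℂ (P n) := LinearMap.mulLeft ℂ (xiv i)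
def mulZ (i : Fin n) : Module.End ℂ (P n) := LinearMap.mulLeft ℂ (zv i)

/-- λ(ξ): the image of λ ∈ ℂ[ξ] in ℂ[ξ,z] -/
def ofXi (l : MvPolynomial (Fin n) ℂ) : P n := rename Sum.inl l
/-- p(z): the image of p ∈ ℂ[z] in ℂ[ξ,z] -/
def ofZ (p : MvPolynomial (Fin n) ℂ) : P n := rename Sum.inr p


/-!
Since `λ(ξ)` is constant in `z` and `p(z)` is constant in `ξ`, the operators `∂^α` and `δ^β` pass
through the factor they do not see: the `(α, β)` term of `(λ₁p₁) ∗_t (λ₂p₂)` is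
`(δ^β λ₁ · ∂^β p₂) · (δ^α λ₂ · ∂^α p₁)` times `c_α c_β`, where `c_α = (-t)^{|α|}/α!`. The double sum
therefore splits into the product of two single sums, and each of these is a product `λ ∗_t p`,
in which only the `α = 0` terms survive. All sums are finite because `δ^β` kills a polynomial
once some `βᵢ` exceeds its total degree.
-/

open Set

namespace Module.End

variable {R M : Type*} [Semiring R] [AddCommMonoid M] [Module R M]

theorem mapsTo_list_prod {S : Set M} {L : List (Module.End R M)}
    (h : ∀ e ∈ L, MapsTo e S S) : MapsTo L.prod S S :=
  List.prod_induction (fun e : Module.End R M => MapsTo e S S)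
    (fun _ _ ha hb => ha.comp hb) (mapsTo_id S) h

theorem list_prod_apply_eq_zero {S : Set M} {L : List (Module.End R M)}
    (h : ∀ e ∈ L, MapsTo e S S) {f : Module.End R M} (hf : f ∈ L) (hfS : ∀ x ∈ S, f x = 0)
    {x : M} (hx : x ∈ S) : L.prod x = 0 := by
  obtain ⟨L₁, L₂, rfl⟩ := List.append_of_mem hf
  have hL₂ : MapsTo L₂.prod S S := mapsTo_list_prod fun e he => h e (by simp [he])
  rw [List.prod_append, List.prod_cons, mul_apply, mul_apply,
    hfS _ (hL₂ hx), map_zero]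

variable (e : Fin n → Module.End R M) (α : Fin n → ℕ)

theorem ofFn_pow_prod_zero : (List.ofFn fun i => e i ^ (0 : Fin n → ℕ) i).prod = 1 := by
  simp [List.ofFn_const, List.prod_replicate]

theorem mapsTo_of_mem_ofFn_pow {S : Set M} (h : ∀ i, MapsTo (e i) S S) :
    ∀ f ∈ List.ofFn (fun i => e i ^ α i), MapsTo f S S := fun _ hf => by
  obtain ⟨i, rfl⟩ := List.mem_ofFn.mp hf
  rw [coe_pow]
  exact (h i).iterate _

theorem mapsTo_ofFn_pow_prod {S : Set M} (h : ∀ i, MapsTo (e i) S S) :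
    MapsTo (List.ofFn fun i => e i ^ α i).prod S S :=
  mapsTo_list_prod (mapsTo_of_mem_ofFn_pow e α h)

theorem ofFn_pow_prod_apply_eq_zero {S : Set M} (h : ∀ i, MapsTo (e i) S S) (j : Fin n)
    (hj : ∀ x ∈ S, (e j ^ α j) x = 0) {x : M} (hx : x ∈ S) :
    (List.ofFn fun i => e i ^ α i).prod x = 0 :=
  list_prod_apply_eq_zero (mapsTo_of_mem_ofFn_pow e α h) (List.mem_ofFn.mpr ⟨j, rfl⟩) hj hx

theorem commute_ofFn_pow_prod {f : Module.End R M} (h : ∀ i, Commute (e i) f) :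
    Commute (List.ofFn fun i => e i ^ α i).prod f :=
  Commute.list_prod_left _ _ fun _ he => by
    obtain ⟨i, rfl⟩ := List.mem_ofFn.mp he
    exact (h i).pow_left _

end Module.End

open Module.End

theorem Derivation.commute_mulLeft {R A : Type*} [CommSemiring R] [CommSemiring A] [Algebra R A]
    (D : Derivation R A A) {a : A} (ha : D a = 0) :
    Commute (D : Module.End R A) (LinearMap.mulLeft R a) :=
  LinearMap.ext fun y => by simp [D.leibniz, ha]

namespace MvPolynomial

variable {R σ : Type*} [CommSemiring R]

theorem totalDegree_pderiv_le (i : σ) (p : MvPolynomial σ R) :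
    (pderiv i p).totalDegree ≤ p.totalDegree - 1 := by
  classical
  refine Finset.sup_le fun s hs => ?_
  rw [mem_support_iff, coeff_pderiv] at hs
  have hdeg := le_totalDegree (mem_support_iff.mpr (left_ne_zero_of_mul hs))
  rw [Finsupp.sum_add_index' (fun _ => rfl) (fun _ _ _ => rfl),
    Finsupp.sum_single_index rfl] at hdeg
  omega

theorem mapsTo_pderiv_totalDegree_le (i : σ) (d : ℕ) :
    MapsTo (pderiv i : MvPolynomial σ R → MvPolynomial σ R) {p | p.totalDegree ≤ d}
      {p | p.totalDegree ≤ d} :=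
  fun p hp => (totalDegree_pderiv_le i p).trans ((Nat.sub_le _ _).trans hp)

theorem pderiv_pow_apply_eq_zero (i : σ) {p : MvPolynomial σ R} {k : ℕ}
    (hk : p.totalDegree < k) : ((pderiv i).toLinearMap ^ k) p = 0 := by
  induction k generalizing p with
  | zero => omega
  | succ k ih =>
    rw [pow_succ, Module.End.mul_apply]
    by_cases hp : p.totalDegree = 0
    · rw [totalDegree_eq_zero_iff_eq_C.mp hp]
      simp
    · exact ih ((totalDegree_pderiv_le i p).trans_lt (by omega))

end MvPolynomial

theorem Dz_zero : Dz (0 : Fin n → ℕ) = 1 := ofFn_pow_prod_zero _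

theorem Dxi_zero : Dxi (0 : Fin n → ℕ) = 1 := ofFn_pow_prod_zero _

theorem dz_ofXi (i : Fin n) (l : MvPolynomial (Fin n) ℂ) : dz i (ofXi l) = 0 := by
  classical
  refine pderiv_eq_zero_of_notMem_vars fun h => ?_
  obtain ⟨j, -, hj⟩ := Finset.mem_image.mp (vars_rename _ _ h)
  exact Sum.inl_ne_inr hj

theorem dxi_ofZ (i : Fin n) (p : MvPolynomial (Fin n) ℂ) : dxi i (ofZ p) = 0 := by
  classical
  refine pderiv_eq_zero_of_notMem_vars fun h => ?_
  obtain ⟨j, -, hj⟩ := Finset.mem_image.mp (vars_rename _ _ h)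
  exact Sum.inr_ne_inl hj

theorem Dz_ofZ_mem_range (α : Fin n → ℕ) (p : MvPolynomial (Fin n) ℂ) :
    Dz α (ofZ p) ∈ range ofZ :=
  mapsTo_ofFn_pow_prod dz α
    (fun i => by
      rintro _ ⟨q, rfl⟩
      exact ⟨pderiv i q, (pderiv_rename Sum.inr_injective i q).symm⟩)
    (mem_range_self p)

theorem Dxi_ofXi_mem_range (α : Fin n → ℕ) (l : MvPolynomial (Fin n) ℂ) :
    Dxi α (ofXi l) ∈ range ofXi :=
  mapsTo_ofFn_pow_prod dxi α
    (fun i => by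
      rintro _ ⟨q, rfl⟩
      exact ⟨pderiv i q, (pderiv_rename Sum.inl_injective i q).symm⟩)
    (mem_range_self l)

theorem Dz_mul_of_dz_eq_zero {a : P n} (ha : ∀ i, dz i a = 0) (α : Fin n → ℕ) (y : P n) :
    Dz α (a * y) = a * Dz α y :=
  LinearMap.congr_fun
    (commute_ofFn_pow_prod dz α fun i => (pderiv (Sum.inr i)).commute_mulLeft (ha i)).eq y

theorem Dxi_mul_of_dxi_eq_zero {a : P n} (ha : ∀ i, dxi i a = 0) (α : Fin n → ℕ) (y : P n) :
    Dxi α (y * a) = Dxi α y * a := by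
  rw [mul_comm, mul_comm _ a]
  exact LinearMap.congr_fun
    (commute_ofFn_pow_prod dxi α fun i => (pderiv (Sum.inl i)).commute_mulLeft (ha i)).eq y

theorem Dz_one {α : Fin n → ℕ} (hα : α ≠ 0) : Dz α (1 : P n) = 0 := by
  obtain ⟨j, hj⟩ := Function.ne_iff.mp hα
  exact ofFn_pow_prod_apply_eq_zero dz α (fun _ => mapsTo_pderiv_totalDegree_le _ 0) j
    (fun _ hx => pderiv_pow_apply_eq_zero _ (hx.trans_lt (Nat.pos_of_ne_zero hj))) (by simp)

theorem Dz_ofXi {α : Fin n → ℕ} (hα : α ≠ 0) (l : MvPolynomial (Fin n) ℂ) :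
    Dz α (ofXi l) = 0 := by
  rw [← mul_one (ofXi l), Dz_mul_of_dz_eq_zero (dz_ofXi · l), Dz_one hα, mul_zero]

theorem finite_support_Dxi (x : P n) : (Function.support fun β => Dxi β x).Finite :=
  (finite_Iic fun _ => x.totalDegree).subset fun β hβ i => by
    by_contra hi
    exact hβ (ofFn_pow_prod_apply_eq_zero dxi β
      (fun _ => mapsTo_pderiv_totalDegree_le _ x.totalDegree) i
      (fun _ hy => pderiv_pow_apply_eq_zero _ (lt_of_le_of_lt hy (not_le.mp hi)))
      (show x.totalDegree ≤ x.totalDegree from le_rfl))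

theorem Dxi_Dz_ofXi_mul_ofZ (α β : Fin n → ℕ) (l p : MvPolynomial (Fin n) ℂ) :
    Dxi β (Dz α (ofXi l * ofZ p)) = Dxi β (ofXi l) * Dz α (ofZ p) := by
  obtain ⟨q, hq⟩ := Dz_ofZ_mem_range α p
  rw [Dz_mul_of_dz_eq_zero (dz_ofXi · l), ← hq, Dxi_mul_of_dxi_eq_zero (dxi_ofZ · q)]

theorem Dz_Dxi_ofXi_mul_ofZ (α β : Fin n → ℕ) (l p : MvPolynomial (Fin n) ℂ) :
    Dz β (Dxi α (ofXi l * ofZ p)) = Dxi α (ofXi l) * Dz β (ofZ p) := by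
  obtain ⟨k, hk⟩ := Dxi_ofXi_mem_range α l
  rw [Dxi_mul_of_dxi_eq_zero (dxi_ofZ · p), ← hk, Dz_mul_of_dz_eq_zero (dz_ofXi · k)]

def astarWeight (t : ℂ) (α : Fin n → ℕ) : ℂ := (-t) ^ mdeg α / mfact α

theorem astarWeight_mul (t : ℂ) (α β : Fin n → ℕ) :
    (-t) ^ (mdeg α + mdeg β) / ((mfact α : ℂ) * (mfact β : ℂ)) =
      astarWeight t α * astarWeight t β := by
  rw [astarWeight, astarWeight, div_mul_div_comm, pow_add]

theorem astar_ofXi_ofZ (t : ℂ) (l p : MvPolynomial (Fin n) ℂ) :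
    astar t (ofXi l) (ofZ p) =
      ∑ᶠ β, astarWeight t β • (Dxi β (ofXi l) * Dz β (ofZ p)) := by
  rw [astar, finsum_eq_single _ 0 fun α hα => by simp [Dz_ofXi hα]]
  simp [astarWeight, mdeg, mfact, Dz_zero, Dxi_zero]

theorem finite_support_astarWeight_smul (t : ℂ) (l p : MvPolynomial (Fin n) ℂ) :
    (Function.support fun β => astarWeight t β • (Dxi β (ofXi l) * Dz β (ofZ p))).Finite :=
  (finite_support_Dxi (ofXi l)).subset fun β hβ h0 => hβ (by simp [h0])

/-- (λ₁(ξ)p₁(z)) ∗_t (λ₂(ξ)p₂(z)) = (λ₁(ξ) ∗_t p₂(z))·(λ₂(ξ) ∗_t p₁(z)). -/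
theorem astar_symmetry (n : ℕ) (t : ℂ) (l₁ l₂ p₁ p₂ : MvPolynomial (Fin n) ℂ) :
    astar t (ofXi l₁ * ofZ p₁) (ofXi l₂ * ofZ p₂) =
      astar t (ofXi l₁) (ofZ p₂) * astar t (ofXi l₂) (ofZ p₁) := by
  rw [astar_ofXi_ofZ, astar_ofXi_ofZ, mul_finsum' _ _ (finite_support_astarWeight_smul t l₂ p₁),
    astar]
  refine finsum_congr fun α => ?_
  rw [finsum_mul' _ _ (finite_support_astarWeight_smul t l₁ p₂)]
  refine finsum_congr fun β => ?_
  rw [Dxi_Dz_ofXi_mul_ofZ, Dz_Dxi_ofXi_mul_ofZ, astarWeight_mul, smul_mul_smul_comm,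
    mul_comm (astarWeight t α)]
  congr 1
  ring
end
end

section
/- For k, m ∈ ℕ, the one-variable generalized Laguerre polynomial satisfies ξ^k·L_m^{[k]}(ξz) = ((-1)^m/m!)·(ξ^{m+k} ∗ z^m) and z^k·L_m^{[k]}(ξz) = ((-1)^m/m!)·(ξ^m ∗ z^{m+k}) in ℂ[ξ,z], where ∗ = ∗_{t=1}. -/
open MvPolynomial

noncomputable section

variable {n : ℕ}

/-- The generalized Laguerre polynomial L_m^{[k]}(z) = Σ_{j=0}^m C(m+k, m-j)(-z)^j/j!. -/
def glaguerre (k m : ℕ) : Polynomial ℂ :=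
  ∑ j ∈ Finset.range (m + 1),
    Polynomial.C (((m + k).choose (m - j) : ℂ) * (-1) ^ j / (j.factorial : ℂ)) *
      Polynomial.X ^ j

/-! Since `∂_z` kills `ξ^a`, only the terms with `α = 0` survive in `ξ^a ∗ z^b`, which leaves
the contraction `Σ_c ((-1)^c/c!) a^{(c)} b^{(c)} ξ^{a-c} z^{b-c}` (falling factorials).
Reindexing `c ↦ m - c`, it matches the Laguerre coefficients via `a^{(c)} = c!·C(a,c)` and
`m^{(c)} = m!/(m-c)!`. -/

namespace MvPolynomial

variable {σ R : Type*} [CommSemiring R]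

theorem pderiv_pow_apply_X_pow_self (i : σ) (a c : ℕ) :
    ((pderiv i).toLinearMap ^ c) (X i ^ a : MvPolynomial σ R) =
      a.descFactorial c • X i ^ (a - c) := by
  induction c with
  | zero => simp
  | succ c ih =>
    rw [pow_succ', Module.End.mul_apply, ih, map_nsmul, Derivation.coeFn_coe, pderiv_pow,
      pderiv_X_self, mul_one, Nat.sub_sub, ← nsmul_eq_mul, smul_smul, Nat.descFactorial_succ,
      mul_comm]

theorem pderiv_pow_apply_X_pow_of_ne {i j : σ} (hij : j ≠ i) (a : ℕ) {c : ℕ} (hc : c ≠ 0) :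
    ((pderiv i).toLinearMap ^ c) (X j ^ a : MvPolynomial σ R) = 0 := by
  obtain ⟨c, rfl⟩ := Nat.exists_eq_succ_of_ne_zero hc
  rw [pow_succ, Module.End.mul_apply, Derivation.coeFn_coe, pderiv_pow,
    pderiv_X_of_ne hij, mul_zero, map_zero]

end MvPolynomial

lemma Dz_fin_one (α : Fin 1 → ℕ) : Dz α = dz 0 ^ α 0 := by simp [Dz, List.ofFn_succ]

lemma Dxi_fin_one (α : Fin 1 → ℕ) : Dxi α = dxi 0 ^ α 0 := by simp [Dxi, List.ofFn_succ]

lemma mdeg_fin_one (α : Fin 1 → ℕ) : mdeg α = α 0 := by simp [mdeg]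

lemma mfact_fin_one (α : Fin 1 → ℕ) : mfact α = (α 0).factorial := by simp [mfact]

lemma Dz_xiv_pow_of_ne_zero (a : ℕ) {α : Fin 1 → ℕ} (hα : α ≠ 0) :
    Dz α ((xiv 0 : P 1) ^ a) = 0 := by
  refine Dz_fin_one α ▸ pderiv_pow_apply_X_pow_of_ne (by simp) a fun h => hα ?_
  exact funext fun i => Fin.fin_one_eq_zero i ▸ h

lemma Dxi_xiv_pow (a : ℕ) (β : Fin 1 → ℕ) :
    Dxi β ((xiv 0 : P 1) ^ a) = (a.descFactorial (β 0) : ℂ) • xiv 0 ^ (a - β 0) := by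
  rw [Dxi_fin_one, Nat.cast_smul_eq_nsmul]
  exact pderiv_pow_apply_X_pow_self _ a _

lemma Dz_zv_pow (b : ℕ) (β : Fin 1 → ℕ) :
    Dz β ((zv 0 : P 1) ^ b) = (b.descFactorial (β 0) : ℂ) • zv 0 ^ (b - β 0) := by
  rw [Dz_fin_one, Nat.cast_smul_eq_nsmul]
  exact pderiv_pow_apply_X_pow_self _ b _

theorem astar_one_xiv_pow_zv_pow (a b : ℕ) :
    astar 1 ((xiv 0 : P 1) ^ a) (zv 0 ^ b) =
      ∑ c ∈ Finset.range (min a b + 1),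
        ((-1 : ℂ) ^ c / c.factorial * a.descFactorial c * b.descFactorial c) •
          (xiv 0 ^ (a - c) * zv 0 ^ (b - c)) := by
  set f : ℕ → P 1 := fun c => ((-1 : ℂ) ^ c / c.factorial * a.descFactorial c *
    b.descFactorial c) • (xiv 0 ^ (a - c) * zv 0 ^ (b - c))
  rw [astar, finsum_eq_single _ 0 fun α hα => by simp [Dz_xiv_pow_of_ne_zero a hα]]
  have hterm (β : Fin 1 → ℕ) : ((-1 : ℂ) ^ (mdeg (0 : Fin 1 → ℕ) + mdeg β) /
      ((mfact (0 : Fin 1 → ℕ) : ℂ) * mfact β)) •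
      (Dxi β (Dz 0 ((xiv 0 : P 1) ^ a)) * Dz β (Dxi 0 (zv 0 ^ b))) = f (β 0) := by
    simp only [Dz_fin_one 0, Dxi_fin_one 0, Pi.zero_apply, pow_zero, Module.End.one_apply,
      Dxi_xiv_pow, Dz_zv_pow, mdeg_fin_one, mfact_fin_one, zero_add, Nat.factorial_zero,
      Nat.cast_one, one_mul, smul_mul_smul_comm, smul_smul, f]
    rw [mul_assoc]
  simp only [hterm]
  refine (finsum_comp_equiv (Equiv.funUnique (Fin 1) ℕ) (f := f)).trans <|
    finsum_eq_sum_of_support_subset f fun c hc => ?_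
  have hc : ¬ (a < c ∨ b < c) := fun h => hc <| by
    rcases h with h | h <;> simp [f, Nat.descFactorial_eq_zero_iff_lt.2 h]
  simp only [Finset.coe_range, Set.mem_Iio]
  omega

lemma aeval_glaguerre {A : Type*} [Semiring A] [Algebra ℂ A] (k m : ℕ) (x : A) :
    Polynomial.aeval x (glaguerre k m) = ∑ c ∈ Finset.range (m + 1),
      (((m + k).choose c : ℂ) * (-1) ^ (m - c) / (m - c).factorial) • x ^ (m - c) := by
  rw [glaguerre, map_sum, ← Finset.sum_range_reflect]
  refine Finset.sum_congr rfl fun c hc => ?_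
  rw [Finset.mem_range] at hc
  rw [Nat.add_sub_cancel, Nat.sub_sub_self (by omega), map_mul, Polynomial.aeval_C, map_pow,
    Polynomial.aeval_X, Algebra.smul_def]

lemma choose_mul_neg_one_pow_div_factorial {K : Type*} [Field K] [CharZero K] {N m c : ℕ}
    (hc : c ≤ m) :
    (N.choose c : K) * (-1) ^ (m - c) / (m - c).factorial =
      (-1) ^ m / m.factorial *
        ((-1) ^ c / c.factorial * N.descFactorial c * m.descFactorial c) := by
  obtain ⟨d, rfl⟩ := Nat.exists_eq_add_of_le hc
  have hN : (N.descFactorial c : K) = c.factorial * N.choose c := by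
    exact_mod_cast Nat.descFactorial_eq_factorial_mul_choose N c
  have hm : ((c + d).factorial : K) = d.factorial * (c + d).descFactorial c := by
    have := Nat.factorial_mul_descFactorial (Nat.le_add_right c d)
    rw [Nat.add_sub_cancel_left] at this
    exact_mod_cast this.symm
  have hsq : ((-1 : K) ^ c) ^ 2 = 1 := by rw [← pow_mul, mul_comm, pow_mul]; norm_num
  rw [Nat.add_sub_cancel_left, hN, hm, pow_add]
  field_simp
  rw [hsq, mul_one, mul_div_mul_right _ _ (Nat.cast_ne_zero.2 c.factorial_ne_zero)]

/-- ξ^k·L_m^{[k]}(ξz) = ((-1)^m/m!)(ξ^{m+k} ∗ z^m) and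
    z^k·L_m^{[k]}(ξz) = ((-1)^m/m!)(ξ^m ∗ z^{m+k}), where ∗ = ∗_{t=1}. -/
theorem glaguerre_eq_astar (k m : ℕ) :
    (xiv 0 : P 1) ^ k * Polynomial.aeval (xiv 0 * zv 0 : P 1) (glaguerre k m) =
      ((-1 : ℂ) ^ m / (m.factorial : ℂ)) • astar 1 ((xiv 0) ^ (m + k)) ((zv 0) ^ m) ∧
    (zv 0 : P 1) ^ k * Polynomial.aeval (xiv 0 * zv 0 : P 1) (glaguerre k m) =
      ((-1 : ℂ) ^ m / (m.factorial : ℂ)) • astar 1 ((xiv 0) ^ m) ((zv 0) ^ (m + k)) := by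
  have hc_le {c : ℕ} (hc : c ∈ Finset.range (m + 1)) : c ≤ m :=
    Nat.lt_succ_iff.1 (Finset.mem_range.1 hc)
  rw [aeval_glaguerre, astar_one_xiv_pow_zv_pow, astar_one_xiv_pow_zv_pow,
    min_eq_right (Nat.le_add_right m k), min_eq_left (Nat.le_add_right m k), Finset.mul_sum,
    Finset.mul_sum, Finset.smul_sum, Finset.smul_sum]
  constructor <;> refine Finset.sum_congr rfl fun c hc => ?_ <;>
    rw [mul_smul_comm, smul_smul, choose_mul_neg_one_pow_div_factorial (hc_le hc), mul_pow]
  · congr 1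
    rw [← mul_assoc, ← pow_add, ← Nat.add_sub_assoc (hc_le hc), add_comm k m]
  · congr 1
    · ring
    · rw [mul_left_comm, ← pow_add, ← Nat.add_sub_assoc (hc_le hc), add_comm k m]
end
end
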